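/- For n ≥ 4, the automaton ℰ_n is synchronizing, the word (a²b^{n-2})^{n-3} a² of length n² - 3n + 2 is a reset word, and the reset threshold of ℰ_n is exactly n² - 3n + 2. -/
import Mathlib
def run {Q A : Type*} (δ : Q → A → Q) (q : Q) (w : List A) : Q := w.foldl δ q
def eAut (n : ℕ) (q : ZMod n) : Bool → ZMod n
  | true => if q.val = 0 then 1 else if q.val = 1 then 2 else q
  | false => if q.val = 0 then 2 else q + 1

theorem run_append' {Q A : Type*} (δ : Q → A → Q) (q : Q) (u v : List A) :
    run δ q (u ++ v) = run δ (run δ q u) v := List.foldl_append ..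

theorem run_cons' {Q A : Type*} (δ : Q → A → Q) (q : Q) (x : A) (v : List A) :
    run δ q (x :: v) = run δ (δ q x) v := rfl

theorem run_replicate' {Q A : Type*} (δ : Q → A → Q) (x : A) (k : ℕ) (q : Q) :
    run δ q (List.replicate k x) = (fun s => δ s x)^[k] q := by
  induction k generalizing q with
  | zero => rfl
  | succ k ih => rw [List.replicate_succ, run_cons', ih, ← Function.iterate_succ_apply]

theorem run_flatten_replicate' {Q A : Type*} (δ : Q → A → Q) (B : List A) (k : ℕ) (q : Q) :
    run δ q ((List.replicate k B).flatten) = (fun s => run δ s B)^[k] q := by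
  induction k generalizing q with
  | zero => rfl
  | succ k ih =>
      rw [List.replicate_succ, List.flatten_cons, run_append', ih,
        ← Function.iterate_succ_apply]

section
variable {n : ℕ}

theorem val_cast' (hn : 4 ≤ n) {v : ℕ} (hv : v < n) : ((v : ℕ) : ZMod n).val = v := by
  haveI : NeZero n := ⟨by omega⟩
  exact ZMod.val_cast_of_lt hv

theorem self_cast (hn : 4 ≤ n) (s : ZMod n) : ((s.val : ℕ) : ZMod n) = s := by
  haveI : NeZero n := ⟨by omega⟩
  rw [ZMod.natCast_val, ZMod.cast_id]

theorem val_a (hn : 4 ≤ n) (s : ZMod n) :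
    (eAut n s true).val = if s.val = 0 then 1 else if s.val = 1 then 2 else s.val := by
  haveI : NeZero n := ⟨by omega⟩
  show (if s.val = 0 then (1:ZMod n) else if s.val = 1 then 2 else s).val = _
  split_ifs with h1 h2
  · rw [show (1:ZMod n) = ((1:ℕ):ZMod n) by push_cast; ring, val_cast' hn (by omega)]
  · rw [show (2:ZMod n) = ((2:ℕ):ZMod n) by push_cast; ring, val_cast' hn (by omega)]
  · rfl

theorem val_b (hn : 4 ≤ n) (s : ZMod n) :
    (eAut n s false).val = if s.val = 0 then 2 else if s.val = n - 1 then 0 else s.val + 1 := by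
  haveI : NeZero n := ⟨by omega⟩
  have hs := ZMod.val_lt s
  show (if s.val = 0 then (2:ZMod n) else s + 1).val = _
  split_ifs with h1 h2
  · rw [show (2:ZMod n) = ((2:ℕ):ZMod n) by push_cast; ring, val_cast' hn (by omega)]
  · rw [← self_cast hn s, h2]
    rw [show (((n-1:ℕ):ZMod n) + 1) = (((n-1+1:ℕ)):ZMod n) by push_cast; ring]
    rw [show n-1+1 = n by omega]
    simp
  · rw [← self_cast hn s]
    rw [show (((s.val:ℕ):ZMod n) + 1) = (((s.val+1:ℕ)):ZMod n) by push_cast; ring]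
    rw [val_cast' hn (by omega), self_cast hn s]

/-- position of a state on the (n-1)-cycle: states 0 and 1 both sit at n-2. -/
def posn (n : ℕ) (s : ZMod n) : ℕ := if s.val ≤ 1 then n - 2 else s.val - 2
/-- cyclic distance (x - q) mod (n-1), for x, q < n-1, without `%`. -/
def dmn (n x q : ℕ) : ℕ := if q ≤ x then x - q else x + (n - 1) - q
def Kn (n : ℕ) (S : Finset (ZMod n)) (q : ℕ) : ℕ := S.sup fun s => dmn n (posn n s) q
def discn (n : ℕ) (S : Finset (ZMod n)) (q : ℕ) : ℤ :=
  if (1 : ZMod n) ∈ S ∧ (0 : ZMod n) ∉ S ∧ q = n - 2 then 1 else 0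
def gn (n : ℕ) (S : Finset (ZMod n)) (q : ℕ) : ℤ :=
  (n : ℤ) * Kn n S q - q - discn n S q
def phin (n : ℕ) (S : Finset (ZMod n)) : ℤ :=
  (insert 0 (Finset.range (n - 1))).inf' (Finset.insert_nonempty _ _) (gn n S)

section
variable {n : ℕ}

theorem discn_nonneg (S : Finset (ZMod n)) (q : ℕ) : 0 ≤ discn n S q := by
  unfold discn; split_ifs <;> omega

theorem discn_le_one (S : Finset (ZMod n)) (q : ℕ) : discn n S q ≤ 1 := by
  unfold discn; split_ifs <;> omega

theorem mem_qset (hn : 4 ≤ n) {q : ℕ} (hq : q < n - 1) :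
    q ∈ insert 0 (Finset.range (n - 1)) :=
  Finset.mem_insert_of_mem (Finset.mem_range.mpr hq)

theorem mem_qset_iff (hn : 4 ≤ n) {q : ℕ} :
    q ∈ insert 0 (Finset.range (n - 1)) ↔ q < n - 1 := by
  simp only [Finset.mem_insert, Finset.mem_range]; omega

theorem phin_le (hn : 4 ≤ n) (S : Finset (ZMod n)) {q : ℕ} (hq : q < n - 1) :
    phin n S ≤ gn n S q := Finset.inf'_le _ (mem_qset hn hq)

theorem le_phin (hn : 4 ≤ n) (S : Finset (ZMod n)) {c : ℤ}
    (h : ∀ q, q < n - 1 → c ≤ gn n S q) : c ≤ phin n S :=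
  Finset.le_inf' _ _ fun q hq => h q ((mem_qset_iff hn).mp hq)

theorem posn_lt (hn : 4 ≤ n) (s : ZMod n) : posn n s < n - 1 := by
  haveI : NeZero n := ⟨by omega⟩
  have := ZMod.val_lt s
  unfold posn; split_ifs <;> omega

theorem phin_singleton (hn : 4 ≤ n) (p : ZMod n) : phin n {p} ≤ 0 := by
  refine le_trans (phin_le hn _ (posn_lt hn p)) ?_
  have hK : Kn n {p} (posn n p) = 0 := by
    rw [Kn, Finset.sup_singleton]; unfold dmn; split_ifs <;> omega
  rw [gn, hK]
  have := discn_nonneg {p} (posn n p)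
  push_cast
  nlinarith [Nat.cast_nonneg (α := ℤ) (posn n p)]

theorem phin_univ [NeZero n] (hn : 4 ≤ n) :
    ((n : ℤ) - 1) * ((n : ℤ) - 2) ≤ phin n (Finset.univ : Finset (ZMod n)) := by
  refine le_phin hn _ fun q hq => ?_
  set t : ℕ := if q = 0 then n - 2 else q - 1 with ht
  have htlt : t < n - 1 := by rw [ht]; split_ifs <;> omega
  set s : ZMod n := if t = n - 2 then (0 : ZMod n) else ((t + 2 : ℕ) : ZMod n) with hs
  have hpos : posn n s = t := by
    rw [hs]; split_ifs with h
    · rw [posn]; simp only [ZMod.val_zero]; rw [if_pos (by omega)]; omega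
    · rw [posn, val_cast' hn (by omega), if_neg (by omega)]; omega
  have hdm : dmn n t q = n - 2 := by
    unfold dmn; rw [ht]; split_ifs <;> omega
  have hK : n - 2 ≤ Kn n Finset.univ q := by
    have h2 := Finset.le_sup (f := fun s => dmn n (posn n s) q) (Finset.mem_univ s)
    simp only [Kn]
    calc n - 2 = dmn n (posn n s) q := by rw [hpos, hdm]
    _ ≤ _ := h2
  have hdisc : discn n Finset.univ q = 0 := by
    rw [discn, if_neg]; rintro ⟨-, h0, -⟩; exact h0 (Finset.mem_univ _)
  rw [gn, hdisc]
  have hK' : ((n : ℤ) - 2) ≤ (Kn n Finset.univ q : ℤ) := by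
    have : ((n - 2 : ℕ) : ℤ) ≤ (Kn n Finset.univ q : ℤ) := by exact_mod_cast hK
    omega
  have hq' : (q : ℤ) ≤ (n : ℤ) - 2 := by omega
  nlinarith [hK', hq', (show (0:ℤ) < n by omega)]
end

section
variable {n : ℕ}

theorem val_inj (hn : 4 ≤ n) {s t : ZMod n} (h : s.val = t.val) : s = t := by
  rw [← self_cast hn s, ← self_cast hn t, h]

theorem val_one' (hn : 4 ≤ n) : (1 : ZMod n).val = 1 := by
  rw [show (1:ZMod n) = ((1:ℕ):ZMod n) by push_cast; ring, val_cast' hn (by omega)]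

theorem val_two' (hn : 4 ≤ n) : (2 : ZMod n).val = 2 := by
  rw [show (2:ZMod n) = ((2:ℕ):ZMod n) by push_cast; ring, val_cast' hn (by omega)]

theorem posn_one (hn : 4 ≤ n) : posn n (1 : ZMod n) = n - 2 := by
  rw [posn, val_one' hn]; norm_num

theorem posn_two (hn : 4 ≤ n) : posn n (2 : ZMod n) = 0 := by
  rw [posn, val_two' hn]; norm_num

theorem eq_one_of_val (hn : 4 ≤ n) {s : ZMod n} (h : s.val = 1) : s = 1 :=
  val_inj hn (by rw [h, val_one' hn])

theorem eq_zero_of_val (hn : 4 ≤ n) {s : ZMod n} (h : s.val = 0) : s = 0 := by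
  haveI : NeZero n := ⟨by omega⟩
  exact val_inj hn (by rw [h, ZMod.val_zero])

theorem a_one (hn : 4 ≤ n) : eAut n (1 : ZMod n) true = 2 := by
  show (if _ then _ else _) = _
  rw [val_one' hn]; norm_num

theorem a_zero (hn : 4 ≤ n) : eAut n (0 : ZMod n) true = 1 := by
  haveI : NeZero n := ⟨by omega⟩
  show (if _ then _ else _) = _
  rw [ZMod.val_zero]; norm_num

theorem posn_a (hn : 4 ≤ n) {s : ZMod n} (h : s.val ≠ 1) :
    posn n (eAut n s true) = posn n s := by
  have h2 := val_a hn s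
  haveI : NeZero n := ⟨by omega⟩
  have h3 := ZMod.val_lt s
  unfold posn; rw [h2]; split_ifs <;> omega

theorem posn_b (hn : 4 ≤ n) (s : ZMod n) :
    posn n (eAut n s false) = if posn n s = n - 2 then 0 else posn n s + 1 := by
  have h2 := val_b hn s
  haveI : NeZero n := ⟨by omega⟩
  have h3 := ZMod.val_lt s
  unfold posn; rw [h2]; split_ifs <;> omega

theorem one_notmem_image_b (hn : 4 ≤ n) (S : Finset (ZMod n)) :
    (1 : ZMod n) ∉ S.image fun s => eAut n s false := by
  haveI : NeZero n := ⟨by omega⟩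
  simp only [Finset.mem_image, not_exists]
  rintro s ⟨hs, heq⟩
  have h2 := val_b hn s
  rw [heq, val_one' hn] at h2
  have h3 := ZMod.val_lt s
  split_ifs at h2 <;> omega

theorem zero_notmem_image_a (hn : 4 ≤ n) (S : Finset (ZMod n)) :
    (0 : ZMod n) ∉ S.image fun s => eAut n s true := by
  haveI : NeZero n := ⟨by omega⟩
  simp only [Finset.mem_image, not_exists]
  rintro s ⟨hs, heq⟩
  have h2 := val_a hn s
  rw [heq, ZMod.val_zero] at h2
  have h3 := ZMod.val_lt s
  split_ifs at h2 <;> omega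

theorem phin_step (hn : 4 ≤ n) (S : Finset (ZMod n)) (x : Bool) :
    phin n S - 1 ≤ phin n (S.image fun s => eAut n s x) := by
  haveI : NeZero n := ⟨by omega⟩
  have hsub : ∀ c : ℤ, ∀ q : ℕ, q < n - 1 → phin n S ≤ gn n S q → gn n S q ≤ c + 1 →
      phin n S - 1 ≤ c := fun c q hq h1 h2 => by linarith
  refine le_phin hn _ fun q' hq' => ?_
  set S' := S.image fun s => eAut n s x with hS'
  cases x with
  | false =>
    have hd' : discn n S' q' = 0 := by
      rw [discn, if_neg]; rintro ⟨h1, -, -⟩; exact one_notmem_image_b hn S h1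
    -- elementwise translation
    have helem : ∀ q : ℕ, (∀ z < n-1, dmn n z q = dmn n (if z = n-2 then 0 else z+1) q') →
        Kn n S q ≤ Kn n S' q' := by
      intro q hdm
      refine Finset.sup_le fun s hs => ?_
      have h1 : dmn n (posn n s) q = dmn n (posn n (eAut n s false)) q' := by
        rw [posn_b hn s]; exact hdm _ (posn_lt hn s)
      rw [h1]
      exact Finset.le_sup (f := fun s => dmn n (posn n s) q')
        (Finset.mem_image_of_mem _ hs)
    by_cases h1 : 1 ≤ q'
    · have hK : Kn n S (q'-1) ≤ Kn n S' q' := by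
        refine helem _ fun z hz => ?_
        unfold dmn; split_ifs <;> omega
      refine hsub _ (q'-1) (by omega) (phin_le hn _ (by omega)) ?_
      have hKc : ((Kn n S (q'-1) : ℤ)) ≤ Kn n S' q' := by exact_mod_cast hK
      have hmul := mul_le_mul_of_nonneg_left hKc (show (0:ℤ) ≤ n by positivity)
      have hd1 := discn_nonneg S (q'-1)
      unfold gn; rw [hd']
      have hc : ((q' - 1 : ℕ) : ℤ) = (q' : ℤ) - 1 := by
        have : (1:ℕ) ≤ q' := h1; push_cast [this]; ring
      rw [hc]; linarith
    · have hq0 : q' = 0 := by omega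
      subst hq0
      have hK : Kn n S (n-2) ≤ Kn n S' 0 := by
        refine helem _ fun z hz => ?_
        unfold dmn; split_ifs <;> omega
      refine hsub _ (n-2) (by omega) (phin_le hn _ (by omega)) ?_
      have hKc : ((Kn n S (n-2) : ℤ)) ≤ Kn n S' 0 := by exact_mod_cast hK
      have hmul := mul_le_mul_of_nonneg_left hKc (show (0:ℤ) ≤ n by positivity)
      have hd1 := discn_nonneg S (n-2)
      unfold gn; rw [hd']
      have hc : ((n - 2 : ℕ) : ℤ) = (n : ℤ) - 2 := by
        have : (2:ℕ) ≤ n := by omega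
        push_cast [this]; ring
      rw [hc]
      push_cast
      linarith
  | true =>
    have hd'le := discn_le_one S' q'
    by_cases hA : (1 : ZMod n) ∈ S ∧ (0 : ZMod n) ∉ S
    · -- the delicate case
      obtain ⟨h1S, h0S⟩ := hA
      have w2 : (2 : ZMod n) ∈ S' := by
        rw [hS']
        exact Finset.mem_image.mpr ⟨1, h1S, a_one hn⟩
      have h2K : dmn n 0 q' ≤ Kn n S' q' := by
        have h := Finset.le_sup (f := fun s => dmn n (posn n s) q') w2
        simpa only [posn_two hn, Kn] using h
      -- elementwise helper for elements other than 1
      have helem2 : ∀ s ∈ S, s.val ≠ 1 → dmn n (posn n s) q' ≤ Kn n S' q' := by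
        intro s hs hs1
        have h1 : dmn n (posn n s) q' = dmn n (posn n (eAut n s true)) q' := by
          rw [posn_a hn hs1]
        rw [h1]
        exact Finset.le_sup (f := fun s => dmn n (posn n s) q')
          (Finset.mem_image_of_mem _ hs)
      by_cases hcov : dmn n (n-2) q' ≤ Kn n S' q'
      · -- case A2
        have hK : Kn n S q' ≤ Kn n S' q' := by
          refine Finset.sup_le fun s hs => ?_
          by_cases hs1 : s.val = 1
          · rw [posn, hs1, if_pos (by omega)]; exact hcov
          · exact helem2 s hs hs1
        refine hsub _ q' hq' (phin_le hn _ hq') ?_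
        have hKc : ((Kn n S q' : ℤ)) ≤ Kn n S' q' := by exact_mod_cast hK
        have hmul := mul_le_mul_of_nonneg_left hKc (show (0:ℤ) ≤ n by positivity)
        have hd1 := discn_nonneg S q'
        unfold gn; linarith
      · -- case A3 : forced q' = 0
        have hq0 : q' = 0 := by
          by_contra hne
          have e0 : dmn n 0 q' = n - 1 - q' := by unfold dmn; split_ifs <;> omega
          have e1 : dmn n (n-2) q' = n - 2 - q' := by unfold dmn; split_ifs <;> omega
          omega
        subst hq0
        have hK : Kn n S (n-2) ≤ Kn n S' 0 + 1 := by
          refine Finset.sup_le fun s hs => ?_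
          by_cases hs1 : s.val = 1
          · rw [posn, hs1, if_pos (by omega)]
            have : dmn n (n-2) (n-2) = 0 := by unfold dmn; split_ifs <;> omega
            omega
          · have hs0 : s.val ≠ 0 := by
              intro h0; exact h0S (eq_zero_of_val hn h0 ▸ hs)
            have hv := ZMod.val_lt s
            have hps : posn n s = s.val - 2 := by rw [posn, if_neg (by omega)]
            have hle : dmn n (posn n s) 0 ≤ Kn n S' 0 := helem2 s hs hs1
            have e2 : dmn n (posn n s) 0 = posn n s := by unfold dmn; split_ifs <;> omega
            have e3 : dmn n (posn n s) (n-2) ≤ posn n s + 1 := by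
              unfold dmn; split_ifs <;> omega
            omega
        have hdS : discn n S (n-2) = 1 := by
          rw [discn, if_pos ⟨h1S, h0S, rfl⟩]
        have hd0 : discn n S' 0 = 0 := by
          rw [discn, if_neg]; rintro ⟨-, -, h⟩; omega
        refine hsub _ (n-2) (by omega) (phin_le hn _ (by omega)) ?_
        have hKc : ((Kn n S (n-2) : ℤ)) ≤ (Kn n S' 0 : ℤ) + 1 := by exact_mod_cast hK
        have hmul := mul_le_mul_of_nonneg_left hKc (show (0:ℤ) ≤ n by positivity)
        unfold gn; rw [hdS, hd0]
        have hc : ((n - 2 : ℕ) : ℤ) = (n : ℤ) - 2 := by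
          have : (2:ℕ) ≤ n := by omega
          push_cast [this]; ring
        rw [hc]
        push_cast
        nlinarith [show (0:ℤ) < n by positivity]
    · -- case A1 : 1 ∉ S or 0 ∈ S
      have hdS : discn n S q' = 0 := by rw [discn, if_neg]; rintro ⟨a, b, -⟩; exact hA ⟨a, b⟩
      have hK : Kn n S q' ≤ Kn n S' q' := by
        refine Finset.sup_le fun s hs => ?_
        by_cases hs1 : s.val = 1
        · have h0S : (0 : ZMod n) ∈ S := by
            by_contra h0
            exact hA ⟨eq_one_of_val hn hs1 ▸ hs, h0⟩
          have w1 : (1 : ZMod n) ∈ S' := by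
            rw [hS']
            exact Finset.mem_image.mpr ⟨0, h0S, a_zero hn⟩
          have h := Finset.le_sup (f := fun s => dmn n (posn n s) q') w1
          rw [posn, hs1, if_pos (by omega), ← posn_one hn]
          simpa only [Kn] using h
        · have h1 : dmn n (posn n s) q' = dmn n (posn n (eAut n s true)) q' := by
            rw [posn_a hn hs1]
          rw [h1]
          exact Finset.le_sup (f := fun s => dmn n (posn n s) q')
            (Finset.mem_image_of_mem _ hs)
      refine hsub _ q' hq' (phin_le hn _ hq') ?_
      have hKc : ((Kn n S q' : ℤ)) ≤ Kn n S' q' := by exact_mod_cast hK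
      have hmul := mul_le_mul_of_nonneg_left hKc (show (0:ℤ) ≤ n by positivity)
      unfold gn; rw [hdS]; linarith
end

section
variable {n : ℕ}

theorem phin_run (hn : 4 ≤ n) (v : List Bool) (S : Finset (ZMod n)) :
    phin n S - v.length ≤ phin n (S.image fun s => run (eAut n) s v) := by
  induction v generalizing S with
  | nil =>
      simp only [List.length_nil, Nat.cast_zero, sub_zero]
      have h : (S.image fun s => run (eAut n) s []) = S := by
        have : (fun s : ZMod n => run (eAut n) s []) = id := rfl
        rw [this, Finset.image_id]
      rw [h]
  | cons x v ih =>
      have h1 := phin_step hn S x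
      have h2 := ih (S.image fun s => eAut n s x)
      rw [Finset.image_image] at h2
      have e : ((fun s => run (eAut n) s v) ∘ fun s => eAut n s x)
          = fun s => run (eAut n) s (x :: v) := rfl
      rw [e] at h2
      simp only [List.length_cons]
      push_cast
      linarith

theorem biterchain (hn : 4 ≤ n) : ∀ (k : ℕ) (t : ZMod n), 2 ≤ t.val → t.val + k ≤ n - 1 →
    (fun s => eAut n s false)^[k] t = ((t.val + k : ℕ) : ZMod n) := by
  haveI : NeZero n := ⟨by omega⟩
  intro k
  induction k with
  | zero =>
      intro t h1 h2
      simpa using (self_cast hn t).symm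
  | succ k ih =>
      intro t h1 h2
      rw [Function.iterate_succ_apply]
      have hv : (eAut n t false).val = t.val + 1 := by
        rw [val_b hn t]; split_ifs <;> omega
      rw [ih (eAut n t false) (by omega) (by omega), hv]
      congr 1; omega

theorem bf_cast_n1 (hn : 4 ≤ n) : eAut n (((n-1 : ℕ)) : ZMod n) false = 0 := by
  haveI : NeZero n := ⟨by omega⟩
  apply eq_zero_of_val hn
  rw [val_b hn _, val_cast' hn (by omega)]
  split_ifs <;> omega

theorem bf_zero (hn : 4 ≤ n) : eAut n (0 : ZMod n) false = 2 := by
  haveI : NeZero n := ⟨by omega⟩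
  show (if (0 : ZMod n).val = 0 then (2 : ZMod n) else _) = 2
  rw [ZMod.val_zero, if_pos rfl]

theorem biter2 (hn : 4 ≤ n) (t : ZMod n) (h : t.val = 2) :
    (fun s => eAut n s false)^[n-2] t = (0 : ZMod n) := by
  have hsplit : n - 2 = 1 + (n - 3) := by omega
  rw [hsplit, Function.iterate_add_apply, biterchain hn (n-3) t (by omega) (by omega),
    Function.iterate_one, show t.val + (n-3) = n - 1 from by omega, bf_cast_n1 hn]

theorem biter3 (hn : 4 ≤ n) (t : ZMod n) (h : 3 ≤ t.val) :
    (fun s => eAut n s false)^[n-2] t = ((t.val - 1 : ℕ) : ZMod n) := by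
  haveI : NeZero n := ⟨by omega⟩
  have hvlt := ZMod.val_lt t
  have hsplit : n - 2 = (t.val - 3) + (1 + (1 + (n - 1 - t.val))) := by omega
  rw [hsplit, Function.iterate_add_apply, Function.iterate_add_apply,
    Function.iterate_add_apply, biterchain hn (n-1-t.val) t (by omega) (by omega),
    show t.val + (n-1-t.val) = n - 1 from by omega, Function.iterate_one,
    bf_cast_n1 hn, bf_zero hn,
    biterchain hn (t.val - 3) 2 (by rw [val_two' hn]) (by rw [val_two' hn]; omega)]
  congr 1
  rw [val_two' hn]
  omega

theorem aa_eq (hn : 4 ≤ n) (s : ZMod n) :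
    eAut n (eAut n s true) true = (((if s.val ≤ 2 then 2 else s.val) : ℕ) : ZMod n) := by
  haveI : NeZero n := ⟨by omega⟩
  have hv := ZMod.val_lt s
  by_cases h0 : s.val = 0
  · have e1 : eAut n s true = 1 := by
      show (if _ then _ else _) = _
      rw [if_pos h0]
    rw [e1, a_one hn, if_pos (by omega)]
    norm_num
  · by_cases h1 : s.val = 1
    · have e1 : eAut n s true = 2 := by
        show (if _ then _ else _) = _
        rw [if_neg (by omega), if_pos h1]
      have e2 : eAut n (2 : ZMod n) true = 2 := by
        show (if _ then _ else _) = _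
        rw [val_two' hn]
        norm_num
      rw [e1, e2, if_pos (by omega)]
      norm_num
    · have e1 : eAut n s true = s := by
        show (if _ then _ else _) = _
        rw [if_neg h0, if_neg h1]
      rw [e1, e1]
      by_cases h2 : s.val = 2
      · rw [if_pos (by omega)]
        apply val_inj hn
        rw [val_cast' hn (by omega)]
        omega
      · rw [if_neg (by omega)]
        exact (self_cast hn s).symm

theorem block_eval (hn : 4 ≤ n) (s : ZMod n) :
    run (eAut n) s (true :: true :: List.replicate (n-2) false)
      = (((if s.val ≤ 2 then 0 else s.val - 1) : ℕ) : ZMod n) := by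
  haveI : NeZero n := ⟨by omega⟩
  have hv := ZMod.val_lt s
  rw [run_cons', run_cons', run_replicate']
  show (fun s => eAut n s false)^[n-2] (eAut n (eAut n s true) true) = _
  rw [aa_eq hn s]
  by_cases h : s.val ≤ 2
  · rw [if_pos h, if_pos h, biter2 hn _ (by rw [val_cast' hn (by omega)])]
    norm_num
  · rw [if_neg h, if_neg h, biter3 hn _ (by rw [val_cast' hn (by omega)]; omega),
      val_cast' hn (by omega)]

theorem block_iter (hn : 4 ≤ n) : ∀ (j : ℕ) (s : ZMod n),
    (fun t => run (eAut n) t (true :: true :: List.replicate (n-2) false))^[j+1] s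
      = (((if j + 4 ≤ s.val then s.val - (j+1) else if s.val = j + 3 then 2 else 0) : ℕ)
          : ZMod n) := by
  haveI : NeZero n := ⟨by omega⟩
  intro j
  induction j with
  | zero =>
      intro s
      rw [Function.iterate_one, block_eval hn s]
      congr 1
      have := ZMod.val_lt s
      split_ifs <;> omega
  | succ j ih =>
      intro s
      rw [Function.iterate_succ_apply', ih s, block_eval hn _]
      have hv := ZMod.val_lt s
      rw [val_cast' hn (by split_ifs <;> omega)]
      congr 1
      split_ifs <;> omega

theorem w_resets (hn : 4 ≤ n) (q : ZMod n) :
    run (eAut n) q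
      ((List.replicate (n - 3) ([true, true] ++ List.replicate (n - 2) false)).flatten
        ++ [true, true]) = (((2:ℕ)) : ZMod n) := by
  haveI : NeZero n := ⟨by omega⟩
  rw [run_append', run_flatten_replicate']
  have hb : ([true,true] ++ List.replicate (n-2) false)
      = true :: true :: List.replicate (n-2) false := rfl
  rw [hb, show n - 3 = (n-4)+1 from by omega, block_iter hn (n-4) q]
  have hv := ZMod.val_lt q
  set u : ℕ := if n - 4 + 4 ≤ q.val then q.val - (n-4+1) else if q.val = n-4+3 then 2 else 0
    with hu
  have hule : u ≤ 2 := by rw [hu]; split_ifs <;> omega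
  show eAut n (eAut n ((u : ℕ) : ZMod n) true) true = _
  rw [aa_eq hn, val_cast' hn (by omega), if_pos hule]
end

/-- For `n ≥ 4`, the automaton `ℰ_n` is synchronizing, the word `(a² b^{n-2})^{n-3} a²`
of length `n² - 3n + 2` is a reset word for it, and its reset threshold is exactly
`n² - 3n + 2`. -/
theorem stmt_10 (n : ℕ) (hn : 4 ≤ n) :
    let w : List Bool :=
      (List.replicate (n - 3) ([true, true] ++ List.replicate (n - 2) false)).flatten
      ++ [true, true]
    w.length = n ^ 2 - 3 * n + 2 ∧
    (∃ p : ZMod n, ∀ q, run (eAut n) q w = p) ∧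
    (∀ v : List Bool, (∃ p : ZMod n, ∀ q, run (eAut n) q v = p) →
      n ^ 2 - 3 * n + 2 ≤ v.length) := by
  intro w
  haveI : NeZero n := ⟨by omega⟩
  refine ⟨?_, ?_, ?_⟩
  · show ((List.replicate (n - 3) ([true, true] ++ List.replicate (n - 2) false)).flatten
      ++ [true, true]).length = n ^ 2 - 3 * n + 2
    rw [List.length_append, List.length_flatten, List.map_replicate, List.sum_replicate,
      smul_eq_mul]
    have h1 : ([true, true] ++ List.replicate (n - 2) false).length = n := by
      rw [List.length_append, List.length_replicate]
      show 2 + (n - 2) = n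
      omega
    rw [h1]
    have h2 : n ^ 2 - 3 * n + 2 = (n - 3) * n + 2 := by
      rw [pow_two, ← Nat.sub_mul]
    rw [h2]
    norm_num
  · exact ⟨((2 : ℕ) : ZMod n), fun q => w_resets hn q⟩
  · rintro v ⟨p, hp⟩
    have himg : (Finset.univ.image fun s => run (eAut n) s v) = {p} := by
      apply Finset.eq_singleton_iff_unique_mem.mpr
      exact ⟨Finset.mem_image.mpr ⟨p, Finset.mem_univ _, hp p⟩,
        fun y hy => by obtain ⟨q, -, hq⟩ := Finset.mem_image.mp hy; rw [← hq, hp q]⟩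
    have h1 := phin_run hn v (Finset.univ : Finset (ZMod n))
    rw [himg] at h1
    have h2 := phin_singleton hn p
    have h3 := phin_univ (n := n) hn
    have h6 : 3 * n ≤ n ^ 2 := by nlinarith
    have h5 : ((n ^ 2 - 3 * n + 2 : ℕ) : ℤ) ≤ (v.length : ℤ) := by
      rw [Nat.cast_add, Nat.cast_sub h6]
      push_cast
      nlinarith [h1, h2, h3]
    exact_mod_cast h5
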